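/- For every real number p with 0 < p < ∞, there exists a sequence (f_n)_{n∈ℕ} of functions on [0,1], each belonging to ℒ^p([0,1]), which is linearly independent (as elements of the space of a.e.-equivalence classes), and such that every nontrivial finite linear combination ∑ α_n f_n (coefficients α_n ∈ ℝ not all zero) belongs to ℒ^p([0,1]) but does not belong to ℒ^q([0,1]) for any real q > p. Consequently, L^p[0,1] \ ⋃_{q>p} L^q[0,1] is ℵ₀-lineable for every p > 0. -/

import Mathlib

/-!
Cut `[2^{-(n+1)}, 2^{-n})` into blocks `J_k` of length `ℓ_k ≤ 2^{-k²}` and let `g_n` be the step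
function equal to `h_k` on `J_k`, with `h_k^p ℓ_k = 2^{-k}`. Then `∫ |g_n|^p = ∑ 2^{-k} < ∞`, while
for `q = c p` with `c > 1` the block `J_k` contributes `(2^{-k}/ℓ_k)^c ℓ_k`, which is at least a
constant multiple of `2^{(c-1)k² - ck}` and hence unbounded. The `g_n` have disjoint supports, so
on the support of `g_{n₀}` a combination `∑ αₙ gₙ` equals `α_{n₀} g_{n₀}`; hence it lies in no
`L^q` as soon as `α_{n₀} ≠ 0`, and in particular it is not a.e. zero.
-/

open MeasureTheory Set Filter Function
open scoped ENNReal

theorem not_memLp_sum_of_disjoint_support {ι α : Type*} [MeasurableSpace α] {μ : Measure α}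
    {p : ℝ≥0∞} {S : ι → Set α} {f : ι → α → ℝ} (hS : Pairwise (Disjoint on S))
    (hSm : ∀ i, MeasurableSet (S i)) (hfS : ∀ i, support (f i) ⊆ S i)
    (hf : ∀ i, ¬MemLp (f i) p μ) {s : Finset ι} {c : ι → ℝ} {i₀ : ι} (hi₀ : i₀ ∈ s)
    (hc : c i₀ ≠ 0) : ¬MemLp (fun x => ∑ i ∈ s, c i * f i x) p μ := by
  intro hsum
  have hrestrict : (S i₀).indicator (fun x => ∑ i ∈ s, c i * f i x) = fun x => c i₀ * f i₀ x := by
    ext x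
    by_cases hx : x ∈ S i₀
    · rw [indicator_of_mem hx, Finset.sum_eq_single_of_mem i₀ hi₀]
      intro i _ hi
      rw [notMem_support.1 fun hxi => (hS hi).ne_of_mem (hfS i hxi) hx rfl, mul_zero]
    · rw [indicator_of_notMem hx, notMem_support.1 fun hxi => hx (hfS i₀ hxi), mul_zero]
  have hscaled := (hsum.indicator (hSm i₀)).const_mul (c i₀)⁻¹
  rw [hrestrict] at hscaled
  exact hf i₀ (by simpa [← mul_assoc, inv_mul_cancel₀ hc] using hscaled)

section StepFunction

variable {α : Type*} {J : ℕ → Set α} {h : ℕ → ℝ}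

noncomputable def stepFun (J : ℕ → Set α) (h : ℕ → ℝ) (x : α) : ℝ :=
  ∑' k, (J k).indicator (fun _ => h k) x

theorem stepFun_apply_of_mem (hJ : Pairwise (Disjoint on J)) {k : ℕ} {x : α} (hx : x ∈ J k) :
    stepFun J h x = h k := by
  rw [stepFun, tsum_eq_single k fun j hj => indicator_of_notMem
    (fun hxj => (hJ hj).ne_of_mem hxj hx rfl) _, indicator_of_mem hx]

theorem stepFun_apply_of_notMem {x : α} (hx : x ∉ ⋃ k, J k) : stepFun J h x = 0 := by
  simp only [mem_iUnion, not_exists] at hx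
  simp [stepFun, indicator_of_notMem (hx _)]

theorem support_stepFun_subset : support (stepFun J h) ⊆ ⋃ k, J k :=
  fun _ hx => by_contra fun hx' => hx (stepFun_apply_of_notMem hx')

theorem hasSum_stepFun (hJ : Pairwise (Disjoint on J)) (x : α) :
    HasSum (fun k => (J k).indicator (fun _ => h k) x) (stepFun J h x) := by
  refine (summable_of_hasFiniteSupport ?_).hasSum
  refine Subsingleton.finite fun j hj k hk => ?_
  by_contra hjk
  exact (hJ hjk).ne_of_mem (support_indicator_subset hj) (support_indicator_subset hk) rfl

variable [MeasurableSpace α]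

theorem measurable_stepFun (hJ : Pairwise (Disjoint on J)) (hJm : ∀ k, MeasurableSet (J k)) :
    Measurable (stepFun J h) :=
  measurable_of_tendsto_metrizable
    (fun n => Finset.measurable_sum (Finset.range n) fun k _ => measurable_const.indicator (hJm k))
    (tendsto_pi_nhds.2 fun x => (hasSum_stepFun hJ x).tendsto_sum_nat)

theorem lintegral_enorm_stepFun_rpow (μ : Measure α) (hJ : Pairwise (Disjoint on J))
    (hJm : ∀ k, MeasurableSet (J k)) {r : ℝ} (hr : 0 < r) :
    ∫⁻ x, ‖stepFun J h x‖ₑ ^ r ∂μ = ∑' k, ‖h k‖ₑ ^ r * μ (J k) := by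
  have hsupp : support (fun x => ‖stepFun J h x‖ₑ ^ r) ⊆ ⋃ k, J k :=
    support_subset_iff'.2 fun x hx => by simp [stepFun_apply_of_notMem hx, hr]
  rw [← setLIntegral_eq_of_support_subset hsupp, lintegral_iUnion hJm hJ]
  refine tsum_congr fun k => ?_
  rw [setLIntegral_congr_fun (hJm k) fun x hx => by rw [stepFun_apply_of_mem hJ hx],
    setLIntegral_const]

theorem memLp_stepFun_iff (μ : Measure α) (hJ : Pairwise (Disjoint on J))
    (hJm : ∀ k, MeasurableSet (J k)) {r : ℝ} (hr : 0 < r) :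
    MemLp (stepFun J h) (ENNReal.ofReal r) μ ↔ ∑' k, ‖h k‖ₑ ^ r * μ (J k) < ∞ := by
  have hlt := eLpNorm_lt_top_iff_lintegral_rpow_enorm_lt_top (f := stepFun J h) (μ := μ)
    (p := ENNReal.ofReal r) (by simpa using hr) ENNReal.ofReal_ne_top
  rw [ENNReal.toReal_ofReal hr.le, lintegral_enorm_stepFun_rpow μ hJ hJm hr] at hlt
  rw [← hlt]
  exact ⟨fun hf => hf.2, fun hf => ⟨(measurable_stepFun hJ hJm).aestronglyMeasurable, hf⟩⟩

end StepFunction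

theorem div_rpow_mul_self_le {A l L c : ℝ} (hA : 0 ≤ A) (hl : 0 < l) (hlL : l ≤ L) (hc : 1 ≤ c) :
    (A / L) ^ c * L ≤ (A / l) ^ c * l := by
  have key : ∀ x, 0 < x → (A / x) ^ c * x = A ^ c * x ^ (1 - c) := fun x hx => by
    rw [Real.div_rpow hA hx.le, Real.rpow_sub hx, Real.rpow_one]; field_simp
  rw [key l hl, key L (hl.trans_le hlL)]
  exact mul_le_mul_of_nonneg_left (Real.rpow_le_rpow_of_nonpos hl hlL (by linarith)) (by positivity)

theorem tendsto_two_inv_pow_div_mul_atTop {w c : ℝ} (hw : 0 < w) (hc : 1 < c) :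
    Tendsto (fun k : ℕ => ((2:ℝ)⁻¹ ^ k / (w * 2⁻¹ ^ k ^ 2)) ^ c * (w * 2⁻¹ ^ k ^ 2))
      atTop atTop := by
  have hlog : ∀ k : ℕ, Real.log (((2:ℝ)⁻¹ ^ k / (w * 2⁻¹ ^ k ^ 2)) ^ c * (w * 2⁻¹ ^ k ^ 2))
      = Real.log 2 * (k * ((c - 1) * k - c)) + (1 - c) * Real.log w := fun k => by
    rw [Real.log_mul (by positivity) (by positivity), Real.log_rpow (by positivity),
      Real.log_div (by positivity) (by positivity), Real.log_mul hw.ne' (by positivity)]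
    simp only [Real.log_pow, Real.log_inv]
    push_cast
    ring
  have hpoly : Tendsto (fun k : ℕ => (k : ℝ) * ((c - 1) * k - c)) atTop atTop :=
    tendsto_natCast_atTop_atTop.atTop_mul_atTop₀ (tendsto_atTop_add_const_right _ _
      (tendsto_natCast_atTop_atTop.const_mul_atTop (by linarith)))
  refine (Real.tendsto_exp_comp_atTop.2 ?_).congr fun k => Real.exp_log (by positivity)
  simp_rw [hlog]
  exact tendsto_atTop_add_const_right _ _ (hpoly.const_mul_atTop (Real.log_pos one_lt_two))

theorem ENNReal.tsum_ofReal_eq_top_of_tendsto_atTop {f : ℕ → ℝ} (hf : Tendsto f atTop atTop) :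
    ∑' k, ENNReal.ofReal (f k) = ∞ := by
  by_contra hfin
  obtain ⟨k, hk⟩ :=
    ((ENNReal.tendsto_ofReal_atTop.comp hf).eventually
      (lt_mem_nhds (lt_top_iff_ne_top.2 hfin))).exists
  exact (ENNReal.le_tsum k).not_gt hk

theorem enorm_rpow_mul_ofReal {h : ℝ} (hh : 0 < h) (l r : ℝ) :
    ‖h‖ₑ ^ r * ENNReal.ofReal l = ENNReal.ofReal (h ^ r * l) := by
  rw [Real.enorm_eq_ofReal hh.le, ENNReal.ofReal_rpow_of_pos hh,
    ← ENNReal.ofReal_mul (by positivity)]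

section SqDyadic

noncomputable def sqDyadicIco (a w : ℝ) (k : ℕ) : Set ℝ :=
  Ico (a + w * 2⁻¹ ^ (k + 1) ^ 2) (a + w * 2⁻¹ ^ k ^ 2)

noncomputable def sqDyadicLength (w : ℝ) (k : ℕ) : ℝ :=
  w * ((2:ℝ)⁻¹ ^ k ^ 2 - 2⁻¹ ^ (k + 1) ^ 2)

noncomputable def sqDyadicHeight (p w : ℝ) (k : ℕ) : ℝ :=
  ((2:ℝ)⁻¹ ^ k / sqDyadicLength w k) ^ p⁻¹

variable {a w : ℝ} {k : ℕ}

theorem antitone_two_inv_pow_sq : Antitone fun k : ℕ => (2:ℝ)⁻¹ ^ k ^ 2 :=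
  fun _ _ hjk => pow_le_pow_of_le_one (by norm_num) (by norm_num) (Nat.pow_le_pow_left hjk 2)

theorem pairwise_disjoint_sqDyadicIco (hw : 0 ≤ w) : Pairwise (Disjoint on sqDyadicIco a w) :=
  ((antitone_two_inv_pow_sq.const_mul hw).const_add a).pairwise_disjoint_on_Ico_succ

theorem sqDyadicIco_subset (hw : 0 ≤ w) : sqDyadicIco a w k ⊆ Ico a (a + w) := by
  refine Ico_subset_Ico ?_ ?_
  · have : 0 ≤ w * (2:ℝ)⁻¹ ^ (k + 1) ^ 2 := by positivity
    linarith
  · have : (2:ℝ)⁻¹ ^ k ^ 2 ≤ 1 := pow_le_one₀ (by norm_num) (by norm_num)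
    nlinarith

theorem volume_sqDyadicIco : volume (sqDyadicIco a w k) = ENNReal.ofReal (sqDyadicLength w k) := by
  rw [sqDyadicIco, Real.volume_Ico, sqDyadicLength]
  ring_nf

theorem sqDyadicLength_pos (hw : 0 < w) : 0 < sqDyadicLength w k :=
  mul_pos hw (sub_pos.2 (pow_lt_pow_right_of_lt_one₀ (by norm_num) (by norm_num)
    (Nat.pow_lt_pow_left k.lt_succ_self two_ne_zero)))

theorem sqDyadicLength_le (hw : 0 ≤ w) : sqDyadicLength w k ≤ w * 2⁻¹ ^ k ^ 2 := by
  have : (0:ℝ) ≤ 2⁻¹ ^ (k + 1) ^ 2 := by positivity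
  rw [sqDyadicLength]; nlinarith

theorem enorm_sqDyadicHeight_rpow_mul_volume {p : ℝ} (hw : 0 < w) (r : ℝ) :
    ‖sqDyadicHeight p w k‖ₑ ^ r * volume (sqDyadicIco a w k)
      = ENNReal.ofReal (((2:ℝ)⁻¹ ^ k / sqDyadicLength w k) ^ (r / p) * sqDyadicLength w k) := by
  have hL := sqDyadicLength_pos (k := k) hw
  rw [volume_sqDyadicIco, enorm_rpow_mul_ofReal (by unfold sqDyadicHeight; positivity),
    sqDyadicHeight, ← Real.rpow_mul (by positivity), inv_mul_eq_div]

end SqDyadic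

theorem exists_memLp_forall_not_memLp_of_lt {a b p : ℝ} (hab : a < b) (hp : 0 < p) :
    ∃ g : ℝ → ℝ, support g ⊆ Ico a b ∧ MemLp g (ENNReal.ofReal p) volume ∧
      ∀ q, p < q → ¬MemLp g (ENNReal.ofReal q) volume := by
  have hw : 0 < b - a := sub_pos.2 hab
  have hJ := pairwise_disjoint_sqDyadicIco (a := a) hw.le
  have hJm : ∀ k, MeasurableSet (sqDyadicIco a (b - a) k) := fun _ => measurableSet_Ico
  refine ⟨stepFun (sqDyadicIco a (b - a)) (sqDyadicHeight p (b - a)), ?_, ?_, fun q hq => ?_⟩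
  · refine support_stepFun_subset.trans (iUnion_subset fun k => ?_)
    simpa using sqDyadicIco_subset (a := a) (k := k) hw.le
  · rw [memLp_stepFun_iff volume hJ hJm hp]
    simp_rw [enorm_sqDyadicHeight_rpow_mul_volume hw, div_self hp.ne', Real.rpow_one,
      div_mul_cancel₀ _ (sqDyadicLength_pos hw).ne']
    rw [← ENNReal.ofReal_tsum_of_nonneg (fun k => by positivity)
      (summable_geometric_of_lt_one (by norm_num) (by norm_num))]
    exact ENNReal.ofReal_lt_top
  · rw [memLp_stepFun_iff volume hJ hJm (hp.trans hq), lt_top_iff_ne_top, not_not]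
    have hc : 1 < q / p := (one_lt_div hp).2 hq
    refine top_le_iff.1 ((ENNReal.tsum_ofReal_eq_top_of_tendsto_atTop
      (tendsto_two_inv_pow_div_mul_atTop hw hc)).symm.le.trans (ENNReal.tsum_le_tsum fun k => ?_))
    rw [enorm_sqDyadicHeight_rpow_mul_volume hw]
    exact ENNReal.ofReal_le_ofReal (div_rpow_mul_self_le (by positivity) (sqDyadicLength_pos hw)
      (sqDyadicLength_le hw.le) hc.le)

theorem MemLp.of_restrict_of_support_subset {α : Type*} [MeasurableSpace α] {μ : Measure α}
    {p : ℝ≥0∞} {s : Set α} {f : α → ℝ} (hs : MeasurableSet s) (hfs : support f ⊆ s)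
    (hf : MemLp f p (μ.restrict s)) : MemLp f p μ := by
  rw [← indicator_eq_self.2 hfs]
  exact (memLp_indicator_iff_restrict hs).2 hf

/-- For every `0 < p < ∞`, the set `L_p[0,1] \ ⋃_{q>p} L_q[0,1]` is `ℵ₀`-lineable:
there is a sequence of functions in `ℒ^p[0,1]`, linearly independent as a.e.-equivalence
classes, such that every nontrivial finite linear combination belongs to `ℒ^p[0,1]`
but to no `ℒ^q[0,1]` with `q > p`. -/
theorem aleph0_lineable_Lp_setminus_union_Lq (p : ℝ) (hp : 0 < p) :
    ∃ f : ℕ → ℝ → ℝ,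
      (∀ n, MemLp (f n) (ENNReal.ofReal p) (volume.restrict (Set.Icc (0:ℝ) 1))) ∧
      (∀ α : ℕ →₀ ℝ,
        (fun x => ∑ n ∈ α.support, α n * f n x)
          =ᵐ[volume.restrict (Set.Icc (0:ℝ) 1)] (fun _ => (0:ℝ)) → α = 0) ∧
      (∀ α : ℕ →₀ ℝ, α ≠ 0 →
        MemLp (fun x => ∑ n ∈ α.support, α n * f n x) (ENNReal.ofReal p)
          (volume.restrict (Set.Icc (0:ℝ) 1)) ∧
        ∀ q : ℝ, p < q →
          ¬ MemLp (fun x => ∑ n ∈ α.support, α n * f n x) (ENNReal.ofReal q)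
            (volume.restrict (Set.Icc (0:ℝ) 1))) := by
  have hS : Pairwise (Disjoint on fun n : ℕ => Ico ((2:ℝ)⁻¹ ^ (n + 1)) (2⁻¹ ^ n)) :=
    Antitone.pairwise_disjoint_on_Ico_succ fun _ _ hmn =>
      pow_le_pow_of_le_one (by norm_num) (by norm_num) hmn
  have hSI (n : ℕ) : Ico ((2:ℝ)⁻¹ ^ (n + 1)) (2⁻¹ ^ n) ⊆ Icc 0 1 :=
    Ico_subset_Icc_self.trans
      (Icc_subset_Icc (by positivity) (pow_le_one₀ (by norm_num) (by norm_num)))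
  have hab (n : ℕ) : (2:ℝ)⁻¹ ^ (n + 1) < 2⁻¹ ^ n :=
    pow_lt_pow_right_of_lt_one₀ (by norm_num) (by norm_num) n.lt_succ_self
  choose f hfS hfp hfq using fun n => exists_memLp_forall_not_memLp_of_lt (hab n) hp
  have hcomb (α : ℕ →₀ ℝ) (hα : α ≠ 0) (q : ℝ) (hq : p < q) :
      ¬MemLp (fun x => ∑ n ∈ α.support, α n * f n x) (ENNReal.ofReal q)
        (volume.restrict (Icc (0:ℝ) 1)) := by
    obtain ⟨n₀, hn₀⟩ := Finsupp.support_nonempty_iff.2 hα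
    refine not_memLp_sum_of_disjoint_support hS (fun _ => measurableSet_Ico) hfS
      (fun n hn => hfq n q hq ?_) hn₀ (Finsupp.mem_support_iff.1 hn₀)
    exact MemLp.of_restrict_of_support_subset measurableSet_Icc ((hfS n).trans (hSI n)) hn
  refine ⟨f, fun n => (hfp n).restrict _, fun α hα0 => ?_, fun α hα =>
    ⟨memLp_finsetSum _ fun n _ => ((hfp n).restrict _).const_mul _, hcomb α hα⟩⟩
  by_contra hα
  exact hcomb α hα (p + 1) (by linarith) (MemLp.zero.ae_eq hα0.symm)
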